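/- arXiv:1105.0437 — 9 statements merged into one kernel-verified Lean document; each statement's English description precedes it below -/
import Mathlib

section
/- Let M be an n×n complex matrix (n ≥ 1), b a block assignment, M_D the pinching of M with respect to b, and M_off = M − M_D. Assume M_D is invertible, det(M) and det(M_D) are real, and every eigenvalue of A = M_D⁻¹ M_off is real and strictly greater than −1. Let ρ = ρ(A) be the spectral radius of A and λ_min the smallest eigenvalue of A. Then 0 ≤ (det(M_D) − det(M))/det(M_D) ≤ 1 − exp(−n ρ²/(1 + λ_min)). -/
/-
Since `M_D` is block diagonal, so is `M_D⁻¹`, while `M_off` vanishes on the diagonal blocks;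
hence `A = M_D⁻¹ M_off` has trace zero, i.e. its real eigenvalues `x_i` sum to zero. From
`M = M_D (1 + A)` we get `det M / det M_D = ∏ (1 + x_i)`. Now `1 + x ≤ eˣ` gives
`∏ (1 + x_i) ≤ e^{∑ x_i} = 1`, while `log (1 + x) ≥ x / (1 + x) ≥ x - x² / (1 + λ_min)`
gives `∏ (1 + x_i) ≥ exp (-∑ x_i² / (1 + λ_min)) ≥ exp (-n ρ² / (1 + λ_min))`.
-/

open Matrix

/-- The pinching (block diagonal part) of a matrix `M` with respect to a
block assignment `b`. -/
def pinch {n k : ℕ} (b : Fin n → Fin k) (M : Matrix (Fin n) (Fin n) ℂ) :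
    Matrix (Fin n) (Fin n) ℂ :=
  fun i j => if b i = b j then M i j else 0

open Polynomial

namespace Real

theorem exp_sub_sq_div_le_one_add {a x : ℝ} (ha : -1 < a) (hax : a ≤ x) :
    exp (x - x ^ 2 / (1 + a)) ≤ 1 + x := by
  have hx : 0 < 1 + x := by linarith
  have hlog : x / (1 + x) ≤ log (1 + x) :=
    calc x / (1 + x) = 1 - (1 + x)⁻¹ := by field_simp; ring
      _ ≤ log (1 + x) := one_sub_inv_le_log_of_pos hx
  have hsq : x - x ^ 2 / (1 + a) ≤ x / (1 + x) := by
    have hmono : x ^ 2 / (1 + x) ≤ x ^ 2 / (1 + a) :=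
      div_le_div_of_nonneg_left (sq_nonneg x) (by linarith) (by linarith)
    have hdiv : x / (1 + x) = x - x ^ 2 / (1 + x) := by field_simp; ring
    linarith
  exact (le_log_iff_exp_le hx).mp (hsq.trans hlog)

theorem multiset_prod_one_add_le_exp_sum {s : Multiset ℝ} (hs : ∀ x ∈ s, -1 ≤ x) :
    (s.map (1 + ·)).prod ≤ exp s.sum := by
  rw [exp_multiset_sum]
  refine Multiset.prod_map_le_prod_map₀ _ _ (fun x hx => ?_) fun x _ => ?_
  · linarith [hs x hx]
  · linarith [add_one_le_exp x]

theorem exp_multiset_sum_sub_sum_sq_div_le_prod_one_add {s : Multiset ℝ} {a : ℝ} (ha : -1 < a)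
    (hs : ∀ x ∈ s, a ≤ x) :
    exp (s.sum - (s.map (· ^ 2)).sum / (1 + a)) ≤ (s.map (1 + ·)).prod := by
  have hsplit : s.sum - (s.map (· ^ 2)).sum / (1 + a) =
      (s.map fun x => x - x ^ 2 / (1 + a)).sum := by
    rw [Multiset.sum_map_sub, Multiset.sum_map_div, Multiset.map_id']
  rw [hsplit, exp_multiset_sum, Multiset.map_map]
  exact Multiset.prod_map_le_prod_map₀ _ _ (fun _ _ => (exp_pos _).le)
    fun x hx => exp_sub_sq_div_le_one_add ha (hs x hx)

theorem exp_neg_card_mul_sq_div_le_prod_one_add {s : Multiset ℝ} {a ρ : ℝ} (ha : -1 < a)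
    (hsum : s.sum = 0) (hlb : ∀ x ∈ s, a ≤ x) (hub : ∀ x ∈ s, |x| ≤ ρ) :
    exp (-(Multiset.card s * ρ ^ 2 / (1 + a))) ≤ (s.map (1 + ·)).prod := by
  refine le_trans (exp_le_exp.mpr ?_) (exp_multiset_sum_sub_sum_sq_div_le_prod_one_add ha hlb)
  have hsq : (s.map (· ^ 2)).sum ≤ Multiset.card s * ρ ^ 2 := by
    simpa using Multiset.sum_le_card_nsmul (s.map (· ^ 2)) (ρ ^ 2) (by
      simpa using fun x hx => sq_le_sq' (abs_le.mp (hub x hx)).1 (abs_le.mp (hub x hx)).2)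
  rw [hsum, zero_sub, neg_le_neg_iff]
  gcongr
  linarith

end Real

theorem Multiset.map_ofReal_map_re {R : Multiset ℂ} (h : ∀ μ ∈ R, μ.im = 0) :
    (R.map Complex.re).map (↑) = R := by
  rw [Multiset.map_map]
  conv_rhs => rw [← Multiset.map_id R]
  exact Multiset.map_congr rfl fun μ hμ => Complex.ext rfl (h μ hμ).symm

namespace Matrix

variable {m : Type*} [Fintype m] [DecidableEq m]

theorem card_roots_charpoly {K : Type*} [Field K] [IsAlgClosed K] (A : Matrix m m K) :
    Multiset.card A.charpoly.roots = Fintype.card m :=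
  (splits_iff_card_roots.mp (IsAlgClosed.splits _)).trans A.charpoly_natDegree_eq_dim

theorem det_one_add_eq_prod_roots_charpoly {K : Type*} [Field K] [IsAlgClosed K]
    (A : Matrix m m K) : (1 + A).det = (A.charpoly.roots.map (1 + ·)).prod := by
  have heval :=
    (IsAlgClosed.splits A.charpoly).eval_eq_prod_roots_of_monic A.charpoly_monic (-1)
  rw [eval_charpoly, show scalar m (-1 : K) - A = -(1 + A) by rw [map_neg, map_one]; abel,
    det_neg, show A.charpoly.roots.map (-1 - ·) = (A.charpoly.roots.map (1 + ·)).map Neg.neg by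
      rw [Multiset.map_map]
      exact Multiset.map_congr rfl fun μ _ => by simp only [Function.comp_apply]; ring,
    Multiset.prod_map_neg, Multiset.card_map, card_roots_charpoly] at heval
  exact mul_left_cancel₀ (pow_ne_zero _ (neg_ne_zero.mpr one_ne_zero)) heval

theorem det_eq_det_mul_det_one_add_inv_mul_sub {R : Type*} [CommRing R] {D : Matrix m m R}
    (hD : IsUnit D.det) (M : Matrix m m R) : M.det = D.det * (1 + D⁻¹ * (M - D)).det := by
  rw [← det_mul, mul_add, mul_one, ← mul_assoc, mul_nonsing_inv _ hD, one_mul, add_sub_cancel]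

variable {A : Matrix m m ℂ}

theorem trace_eq_sum_re_roots_charpoly (h : ∀ μ ∈ A.charpoly.roots, μ.im = 0) :
    A.trace = ((A.charpoly.roots.map Complex.re).sum : ℝ) := by
  rw [A.trace_eq_sum_roots_charpoly]
  conv_lhs => rw [← Multiset.map_ofReal_map_re h]
  exact (map_multiset_sum Complex.ofRealHom _).symm

theorem det_one_add_eq_prod_re_roots_charpoly (h : ∀ μ ∈ A.charpoly.roots, μ.im = 0) :
    (1 + A).det = (((A.charpoly.roots.map Complex.re).map (1 + ·)).prod : ℝ) := by
  rw [det_one_add_eq_prod_roots_charpoly]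
  conv_lhs => rw [← Multiset.map_ofReal_map_re h]
  refine .trans ?_ (map_multiset_prod Complex.ofRealHom _).symm
  simp only [Multiset.map_map]
  exact congrArg _ (Multiset.map_congr rfl fun x _ => by simp)

end Matrix

section Pinching

variable {n k : ℕ} (b : Fin n → Fin k) (M : Matrix (Fin n) (Fin n) ℂ)

theorem pinch_apply_of_ne {i j : Fin n} (h : b i ≠ b j) : pinch b M i j = 0 := if_neg h

-- A block diagonal matrix is block triangular for both `b` and `toDual ∘ b`.
theorem inv_pinch_apply_of_ne {i j : Fin n} (h : b i ≠ b j) : (pinch b M)⁻¹ i j = 0 := by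
  by_cases hM : IsUnit (pinch b M).det
  · let _ := invertibleOfIsUnitDet _ hM
    rcases h.lt_or_gt with hij | hij
    · exact blockTriangular_inv_of_blockTriangular (b := OrderDual.toDual ∘ b)
        (fun i j h => pinch_apply_of_ne b M fun e => h.ne (congrArg OrderDual.toDual e.symm))
        (OrderDual.toDual_lt_toDual.mpr hij)
    · exact blockTriangular_inv_of_blockTriangular (b := b)
        (fun i j h => pinch_apply_of_ne b M (ne_of_gt h)) hij
  · simp [nonsing_inv_apply_not_isUnit _ hM]

theorem trace_inv_pinch_mul_sub_pinch : ((pinch b M)⁻¹ * (M - pinch b M)).trace = 0 := by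
  simp only [trace, diag, mul_apply]
  refine Finset.sum_eq_zero fun i _ => Finset.sum_eq_zero fun j _ => ?_
  by_cases h : b i = b j
  · simp [pinch, h]
  · simp [inv_pinch_apply_of_ne b M h]

end Pinching

theorem stmt0_general {n k : ℕ}
    (M : Matrix (Fin n) (Fin n) ℂ) (b : Fin n → Fin k)
    (MD Moff A : Matrix (Fin n) (Fin n) ℂ)
    (hMD : MD = pinch b M) (hMoff : Moff = M - MD) (hA : A = MD⁻¹ * Moff)
    (hMDinv : IsUnit MD.det)
    (hMDreal : (MD.det).im = 0)
    (heig : ∀ μ ∈ A.charpoly.roots, μ.im = 0 ∧ -1 < μ.re)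
    (ρ : ℝ)
    (hρub : ∀ μ ∈ A.charpoly.roots, ‖μ‖ ≤ ρ)
    (lmin : ℝ)
    (hlb : ∀ μ ∈ A.charpoly.roots, lmin ≤ μ.re)
    (hlmin : ∃ μ ∈ A.charpoly.roots, μ.re = lmin) :
    0 ≤ (MD.det.re - M.det.re) / MD.det.re ∧
      (MD.det.re - M.det.re) / MD.det.re ≤
        1 - Real.exp (-((n : ℝ) * ρ ^ 2 / (1 + lmin))) := by
  set s := A.charpoly.roots.map Complex.re
  have hreal : ∀ μ ∈ A.charpoly.roots, μ.im = 0 := fun μ hμ => (heig μ hμ).1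
  have hsum : s.sum = 0 := by
    have htr : A.trace = 0 := by
      rw [hA, hMoff, hMD]
      exact trace_inv_pinch_mul_sub_pinch b M
    exact_mod_cast (trace_eq_sum_re_roots_charpoly hreal).symm.trans htr
  have hdet : M.det.re = MD.det.re * (s.map (1 + ·)).prod := by
    rw [det_eq_det_mul_det_one_add_inv_mul_sub hMDinv M, ← hMoff, ← hA,
      det_one_add_eq_prod_re_roots_charpoly hreal, Complex.re_mul_ofReal]
  have hMD0 : MD.det.re ≠ 0 := fun h => hMDinv.ne_zero (Complex.ext h hMDreal)
  have hP_le := Real.multiset_prod_one_add_le_exp_sum (s := s)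
    (Multiset.forall_mem_map_iff.mpr fun μ hμ => (heig μ hμ).2.le)
  have hP_ge := Real.exp_neg_card_mul_sq_div_le_prod_one_add (s := s) (ρ := ρ)
    (by obtain ⟨μ, hμ, rfl⟩ := hlmin; exact (heig μ hμ).2) hsum
    (Multiset.forall_mem_map_iff.mpr hlb)
    (Multiset.forall_mem_map_iff.mpr fun μ hμ => (Complex.abs_re_le_norm μ).trans (hρub μ hμ))
  rw [Multiset.card_map, card_roots_charpoly, Fintype.card_fin] at hP_ge
  rw [hsum, Real.exp_zero] at hP_le
  rw [hdet, show ∀ P, (MD.det.re - MD.det.re * P) / MD.det.re = 1 - P by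
    intro P; field_simp]
  constructor <;> linarith

/-- **Theorem (diagonal approximation, real eigenvalues).**
If `M_D` (the pinching of `M`) is invertible, `det M` and `det M_D` are real,
and all eigenvalues of `A = M_D⁻¹ M_off` are real and `> -1`, then
`0 ≤ (det M_D - det M)/det M_D ≤ 1 - exp(-n ρ² / (1 + λ_min))`,
where `ρ` is the spectral radius of `A` and `λ_min` its smallest eigenvalue. -/
theorem stmt0 {n k : ℕ} (hn : 1 ≤ n)
    (M : Matrix (Fin n) (Fin n) ℂ) (b : Fin n → Fin k)
    (MD Moff A : Matrix (Fin n) (Fin n) ℂ)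
    (hMD : MD = pinch b M) (hMoff : Moff = M - MD) (hA : A = MD⁻¹ * Moff)
    (hMDinv : IsUnit MD.det)
    (hMreal : (M.det).im = 0) (hMDreal : (MD.det).im = 0)
    (heig : ∀ μ ∈ A.charpoly.roots, μ.im = 0 ∧ -1 < μ.re)
    (ρ : ℝ)
    (hρub : ∀ μ ∈ A.charpoly.roots, ‖μ‖ ≤ ρ)
    (hρmax : ∃ μ ∈ A.charpoly.roots, ‖μ‖ = ρ)
    (lmin : ℝ)
    (hlb : ∀ μ ∈ A.charpoly.roots, lmin ≤ μ.re)
    (hlmin : ∃ μ ∈ A.charpoly.roots, μ.re = lmin) :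
    0 ≤ (MD.det.re - M.det.re) / MD.det.re ∧
      (MD.det.re - M.det.re) / MD.det.re ≤
        1 - Real.exp (-((n : ℝ) * ρ ^ 2 / (1 + lmin))) :=
  stmt0_general M b MD Moff A hMD hMoff hA hMDinv hMDreal heig ρ hρub lmin hlb hlmin
end

section
/- Let A be an n×n complex matrix (n ≥ 1) all of whose eigenvalues are real and strictly greater than −1, let ρ = ρ(A) be its spectral radius and λ_min its smallest eigenvalue. Then det(I + A) is a positive real number, the trace t of A is real, and exp(t − n ρ²/(1 + λ_min)) ≤ det(I + A) ≤ exp(t). -/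
/-!
Since the eigenvalues `λᵢ` are real, `det (I + A) = ∏ (λᵢ + 1)` and `trace A = ∑ λᵢ` are real, and
both bounds follow factor by factor from scalar inequalities valid for `x > -1`: the upper one from
`x + 1 ≤ exp x`, the lower one from `x - x² / (x + 1) = 1 - (x + 1)⁻¹ ≤ log (x + 1)` together with
`x² / (x + 1) ≤ ρ² / (1 + λ_min)`.
-/

open Matrix Polynomial

namespace Matrix

variable {n R : Type*} [Fintype n] [DecidableEq n] [CommRing R] [IsDomain R]

theorem roots_charpoly_add_scalar (A : Matrix n n R) (c : R) :
    (A + scalar n c).charpoly.roots = A.charpoly.roots.map (· + c) := by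
  have hshift : (A + scalar n c).charpoly = A.charpoly.comp (C 1 * X + C (-c)) := by
    rw [← sub_neg_eq_add, ← map_neg, charpoly_sub_scalar, map_one, one_mul]
  rw [← map_roots_comp_C_mul_X_add_C A.charpoly 1 (-c) isUnit_one, ← hshift, Multiset.map_map]
  simp

theorem det_add_one_eq_prod_roots_charpoly {K : Type*} [Field K] [IsAlgClosed K]
    (A : Matrix n n K) : (A + 1).det = (A.charpoly.roots.map (· + 1)).prod := by
  rw [← roots_charpoly_add_scalar, ← det_eq_prod_roots_charpoly, map_one]

end Matrix

theorem Multiset.map_re_map_ofReal {s : Multiset ℂ} (h : ∀ z ∈ s, z.im = 0) :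
    (s.map Complex.re).map Complex.ofReal = s := by
  rw [Multiset.map_map]
  conv_rhs => rw [← Multiset.map_id s]
  exact Multiset.map_congr rfl fun z hz ↦ Complex.ext (by simp) (by simp [h z hz])

namespace Real

theorem exp_sub_sq_div_le_add_one {x ρ l : ℝ} (hl : -1 < l) (hlx : l ≤ x) (hxρ : |x| ≤ ρ) :
    exp (x - ρ ^ 2 / (1 + l)) ≤ x + 1 := by
  have hx : 0 < x + 1 := by linarith
  have hsq : x ^ 2 ≤ ρ ^ 2 := sq_abs x ▸ pow_le_pow_left₀ (abs_nonneg x) hxρ 2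
  calc exp (x - ρ ^ 2 / (1 + l))
      ≤ exp (x - x ^ 2 / (x + 1)) := by
        gcongr exp (x - ?_)
        exact div_le_div₀ (sq_nonneg ρ) hsq (by linarith) (by linarith)
    _ = exp (1 - (x + 1)⁻¹) := by
        congr 1
        field_simp
        ring
    _ ≤ exp (log (x + 1)) := exp_le_exp.2 (one_sub_inv_le_log_of_pos hx)
    _ = x + 1 := exp_log hx

theorem multiset_prod_add_one_le_exp_sum {t : Multiset ℝ} (h : ∀ x ∈ t, -1 ≤ x) :
    (t.map (· + 1)).prod ≤ exp t.sum := by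
  rw [exp_multiset_sum]
  exact Multiset.prod_map_le_prod_map₀ _ _ (fun x hx ↦ by linarith [h x hx])
    fun x _ ↦ add_one_le_exp x

theorem exp_sum_sub_le_multiset_prod_add_one {t : Multiset ℝ} {ρ l : ℝ} (hl : -1 < l)
    (hlt : ∀ x ∈ t, l ≤ x) (hρ : ∀ x ∈ t, |x| ≤ ρ) :
    exp (t.sum - t.card * (ρ ^ 2 / (1 + l))) ≤ (t.map (· + 1)).prod := by
  have hsum : t.sum - t.card * (ρ ^ 2 / (1 + l)) = (t.map (· - ρ ^ 2 / (1 + l))).sum := by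
    rw [Multiset.sum_map_sub, Multiset.map_id', Multiset.map_const', Multiset.sum_replicate,
      nsmul_eq_mul]
  rw [hsum, exp_multiset_sum, Multiset.map_map]
  exact Multiset.prod_map_le_prod_map₀ _ _ (fun x _ ↦ (exp_pos _).le)
    fun x hx ↦ exp_sub_sq_div_le_add_one hl (hlt x hx) (hρ x hx)

end Real

theorem stmt1_general {n : ℕ} (A : Matrix (Fin n) (Fin n) ℂ)
    (heig : ∀ μ ∈ A.charpoly.roots, μ.im = 0 ∧ -1 < μ.re)
    (ρ : ℝ)
    (hρub : ∀ μ ∈ A.charpoly.roots, ‖μ‖ ≤ ρ)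
    (lmin : ℝ)
    (hlb : ∀ μ ∈ A.charpoly.roots, lmin ≤ μ.re)
    (hlmin : ∃ μ ∈ A.charpoly.roots, μ.re = lmin) :
    ((1 + A).det).im = 0 ∧ 0 < ((1 + A).det).re ∧
      (A.trace).im = 0 ∧
      Real.exp (A.trace.re - (n : ℝ) * ρ ^ 2 / (1 + lmin)) ≤ ((1 + A).det).re ∧
      ((1 + A).det).re ≤ Real.exp (A.trace.re) := by
  have hl : -1 < lmin := by
    obtain ⟨μ, hμ, rfl⟩ := hlmin
    exact (heig μ hμ).2
  obtain ⟨t, hroots⟩ : ∃ t : Multiset ℝ, A.charpoly.roots = t.map (↑) :=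
    ⟨_, (Multiset.map_re_map_ofReal fun μ hμ ↦ (heig μ hμ).1).symm⟩
  have hcard : t.card = n := by
    rw [← Multiset.card_map Complex.ofReal, ← hroots, IsAlgClosed.card_roots_eq_natDegree,
      charpoly_natDegree_eq_dim, Fintype.card_fin]
  have hdet : (1 + A).det = ((t.map (· + 1)).prod : ℝ) := by
    rw [add_comm, det_add_one_eq_prod_roots_charpoly, hroots, Multiset.map_map,
      ← Complex.ofRealHom_eq_coe, map_multiset_prod, Multiset.map_map]
    simp
  have htr : A.trace = (t.sum : ℝ) := by
    rw [trace_eq_sum_roots_charpoly, hroots, ← Complex.ofRealHom_eq_coe, map_multiset_sum]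
    rfl
  rw [hroots] at heig hρub hlb
  simp only [Multiset.forall_mem_map_iff, Complex.ofReal_re, Complex.norm_real,
    Real.norm_eq_abs] at heig hρub hlb
  rw [hdet, htr, Complex.ofReal_re, Complex.ofReal_re, Complex.ofReal_im, Complex.ofReal_im]
  refine ⟨rfl, Multiset.prod_pos ?_, rfl, ?_, Real.multiset_prod_add_one_le_exp_sum ?_⟩
  · simp only [Multiset.forall_mem_map_iff]
    exact fun x hx ↦ by linarith [(heig x hx).2]
  · rw [← hcard, mul_div_assoc]
    exact Real.exp_sum_sub_le_multiset_prod_add_one hl hlb hρub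
  · exact fun x hx ↦ (heig x hx).2.le

/-- **Theorem.** If all eigenvalues of the `n × n` complex matrix `A` (`n ≥ 1`)
are real and `> -1`, with spectral radius `ρ` and smallest eigenvalue `λ_min`,
then `det (I + A)` is a positive real, `trace A` is real, and
`exp(trace A - n ρ²/(1+λ_min)) ≤ det (I + A) ≤ exp(trace A)`. -/
theorem stmt1 {n : ℕ} (hn : 1 ≤ n) (A : Matrix (Fin n) (Fin n) ℂ)
    (heig : ∀ μ ∈ A.charpoly.roots, μ.im = 0 ∧ -1 < μ.re)
    (ρ : ℝ)
    (hρub : ∀ μ ∈ A.charpoly.roots, ‖μ‖ ≤ ρ)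
    (hρmax : ∃ μ ∈ A.charpoly.roots, ‖μ‖ = ρ)
    (lmin : ℝ)
    (hlb : ∀ μ ∈ A.charpoly.roots, lmin ≤ μ.re)
    (hlmin : ∃ μ ∈ A.charpoly.roots, μ.re = lmin) :
    ((1 + A).det).im = 0 ∧ 0 < ((1 + A).det).re ∧
      (A.trace).im = 0 ∧
      Real.exp (A.trace.re - (n : ℝ) * ρ ^ 2 / (1 + lmin)) ≤ ((1 + A).det).re ∧
      ((1 + A).det).re ≤ Real.exp (A.trace.re) :=
  stmt1_general A heig ρ hρub lmin hlb hlmin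
end

section
/- Let M be an n×n complex matrix (n ≥ 1), b a block assignment, M_D the pinching of M with respect to b, and M_off = M − M_D. Assume M_D is invertible and ρ = ρ(M_D⁻¹ M_off) < 1, and set c = −n·ln(1 − ρ). Then |det(M) − det(M_D)| / |det(M_D)| ≤ c ρ · e^{c ρ}. If in addition c ρ < 1, then |det(M) − det(M_D)| / |det(M_D)| ≤ (7/4) c ρ. -/
open Matrix

/-!
Write `M = M_D (1 + A)` with `A = M_D⁻¹ M_off`, so the relative error is `|det (1 + A) - 1|`.
Since `M_D⁻¹` is again block diagonal and `M_off` vanishes on the diagonal blocks, `A` has zero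
diagonal, so its eigenvalues `μ` sum to zero and `det (1 + A) = exp (∑ (log (1 + μ) - μ))`.
Comparing Taylor series termwise, `|log (1 + μ) - μ| ≤ -log (1 - ρ) - ρ ≤ -log (1 - ρ) ρ`, hence
the exponent has modulus at most `c ρ` and `|det (1 + A) - 1| ≤ e^{c ρ} - 1`. The two bounds
follow from `e^t - 1 ≤ t e^t` and, for `t ≤ 1`, from convexity: `e^t - 1 ≤ (e - 1) t`.
-/

theorem Real.self_le_neg_log_one_sub {r : ℝ} (hr : r < 1) : r ≤ -log (1 - r) := by
  have := log_le_sub_one_of_pos (sub_pos.mpr hr)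
  linarith

theorem Real.neg_log_one_sub_sub_self_le {r : ℝ} (hr : r < 1) :
    -log (1 - r) - r ≤ -log (1 - r) * r := by
  have h := mul_le_mul_of_nonneg_left (one_sub_inv_le_log_of_pos (sub_pos.mpr hr))
    (sub_pos.mpr hr).le
  rw [mul_sub, mul_inv_cancel₀ (sub_pos.mpr hr).ne'] at h
  nlinarith

theorem Real.exp_sub_one_le_mul_exp (t : ℝ) : exp t - 1 ≤ t * exp t := by
  have h := mul_le_mul_of_nonneg_right (add_one_le_exp (-t)) (exp_pos t).le
  rw [← exp_add, neg_add_cancel, exp_zero] at h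
  linarith

theorem Real.exp_sub_one_le_mul_of_le_one {t : ℝ} (h0 : 0 ≤ t) (h1 : t ≤ 1) :
    exp t - 1 ≤ (exp 1 - 1) * t := by
  have h := convexOn_exp.2 (Set.mem_univ 0) (Set.mem_univ 1) (sub_nonneg.mpr h1) h0
    (sub_add_cancel 1 t)
  simp only [smul_eq_mul, mul_zero, mul_one, zero_add, exp_zero] at h
  linarith

theorem Complex.norm_exp_sub_one_le_exp_norm_sub_one (z : ℂ) :
    ‖exp z - 1‖ ≤ Real.exp ‖z‖ - 1 := by
  simpa using norm_exp_sub_sum_le_exp_norm_sub_sum z 1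

theorem Complex.norm_log_one_add_sub_self_le_of_norm_le {z : ℂ} {r : ℝ} (hz : ‖z‖ ≤ r)
    (hr : r < 1) : ‖log (1 + z) - z‖ ≤ -Real.log (1 - r) - r := by
  have hr0 : 0 ≤ r := (norm_nonneg z).trans hz
  have hlog := (hasSum_nat_add_iff' 1).mpr (hasSum_taylorSeries_log (hz.trans_lt hr))
  rw [Finset.sum_range_one, Nat.cast_zero, div_zero, sub_zero] at hlog
  have hreal := Real.hasSum_pow_div_log_of_abs_lt_one (by rwa [abs_of_nonneg hr0])
  refine (hlog.sub (hasSum_ite_eq 0 z)).norm_le_of_bounded (hreal.sub (hasSum_ite_eq 0 r))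
    fun m ↦ ?_
  rcases m with _ | m
  · simp
  · simp only [Nat.add_eq_zero_iff, one_ne_zero, and_false, if_false, sub_zero, norm_div,
      norm_mul, norm_pow, norm_neg, norm_one, one_pow, one_mul, Complex.norm_natCast]
    push_cast
    gcongr

namespace Matrix

variable {ι : Type*} [Fintype ι] [DecidableEq ι]

theorem nonsing_inv_mem {K : Type*} [Field K] {S : Subalgebra K (Matrix ι ι K)}
    {M : Matrix ι ι K} (hM : M ∈ S) : M⁻¹ ∈ S := by
  by_cases hdet : IsUnit M.det
  · -- `S` is finite-dimensional, so the injective map `x ↦ M * x` on `S` is onto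
    have hinj : Function.Injective (LinearMap.mulLeft K (⟨M, hM⟩ : S)) := fun x y hxy ↦
      Subtype.ext <| ((isUnit_iff_isUnit_det M).mpr hdet).mul_left_cancel
        (congrArg Subtype.val hxy)
    obtain ⟨y, hy⟩ := LinearMap.injective_iff_surjective.mp hinj 1
    rw [inv_eq_right_inv (congrArg Subtype.val hy)]
    exact y.2
  · rw [nonsing_inv_apply_not_isUnit M hdet]
    exact S.zero_mem

theorem det_one_add_eq_prod_roots {K : Type*} [Field K] [IsAlgClosed K] (A : Matrix ι ι K) :
    (1 + A).det = (A.charpoly.roots.map (1 + ·)).prod := by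
  have h1A : 1 + A = A - scalar ι (-1 : K) := by
    rw [map_neg, map_one, sub_neg_eq_add, add_comm]
  have hroots := Polynomial.roots_comp_C_mul_X_add_C A.charpoly 1 (-1) isUnit_one
  rw [map_one, one_mul] at hroots
  rw [det_eq_prod_roots_charpoly, h1A, charpoly_sub_scalar, hroots]
  congr 1
  refine Multiset.map_congr rfl fun x _ ↦ ?_
  simp [add_comm]

theorem norm_det_sub_div_norm_det {K : Type*} [NormedField K] {D M : Matrix ι ι K}
    (hD : IsUnit D.det) : ‖M.det - D.det‖ / ‖D.det‖ = ‖(1 + D⁻¹ * (M - D)).det - 1‖ := by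
  have hM : D * (1 + D⁻¹ * (M - D)) = M := by
    rw [Matrix.mul_add, Matrix.mul_one, ← Matrix.mul_assoc, mul_nonsing_inv D hD,
      Matrix.one_mul, add_sub_cancel]
  conv_lhs => rw [← hM, det_mul, ← mul_sub_one, norm_mul]
  exact mul_div_cancel_left₀ _ (norm_ne_zero_iff.mpr hD.ne_zero)

theorem norm_det_one_add_sub_one_le {A : Matrix ι ι ℂ} {ρ : ℝ} (htr : A.trace = 0)
    (hρ : ∀ μ ∈ A.charpoly.roots, ‖μ‖ ≤ ρ) (hρ1 : ρ < 1) :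
    ‖(1 + A).det - 1‖ ≤ Real.exp (Fintype.card ι * (-Real.log (1 - ρ) - ρ)) - 1 := by
  set r := A.charpoly.roots
  have hcard : Multiset.card r = Fintype.card ι := by
    rw [Polynomial.splits_iff_card_roots.mp (IsAlgClosed.splits A.charpoly),
      charpoly_natDegree_eq_dim]
  have hne : ∀ μ ∈ r, 1 + μ ≠ 0 := fun μ hμ h ↦ by
    have := hρ μ hμ
    rw [eq_neg_of_add_eq_zero_right h, norm_neg, norm_one] at this
    linarith
  have hdet : (1 + A).det = Complex.exp (r.map fun μ ↦ Complex.log (1 + μ)).sum := by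
    rw [det_one_add_eq_prod_roots, Complex.exp_multiset_sum, Multiset.map_map]
    exact congrArg _ (Multiset.map_congr rfl fun μ hμ ↦ (Complex.exp_log (hne μ hμ)).symm)
  have hsum : (r.map fun μ ↦ Complex.log (1 + μ)).sum
      = (r.map fun μ ↦ Complex.log (1 + μ) - μ).sum := by
    rw [Multiset.sum_map_sub, Multiset.map_id', ← trace_eq_sum_roots_charpoly, htr, sub_zero]
  have hbound : ‖(r.map fun μ ↦ Complex.log (1 + μ) - μ).sum‖
      ≤ Fintype.card ι * (-Real.log (1 - ρ) - ρ) := by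
    calc _ ≤ ((r.map fun μ ↦ Complex.log (1 + μ) - μ).map norm).sum := norm_multiset_sum_le _
      _ ≤ Multiset.card ((r.map fun μ ↦ Complex.log (1 + μ) - μ).map norm)
            • (-Real.log (1 - ρ) - ρ) := by
          refine Multiset.sum_le_card_nsmul _ _ fun x hx ↦ ?_
          obtain ⟨μ, hμ, rfl⟩ := Multiset.mem_map.mp (Multiset.map_map _ _ r ▸ hx)
          exact Complex.norm_log_one_add_sub_self_le_of_norm_le (hρ μ hμ) hρ1
      _ = _ := by rw [Multiset.card_map, Multiset.card_map, hcard, nsmul_eq_mul]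
  rw [hdet, hsum]
  exact (Complex.norm_exp_sub_one_le_exp_norm_sub_one _).trans (by gcongr)

def pinchSubalgebra (R : Type*) [CommSemiring R] {β : Type*} (b : ι → β) :
    Subalgebra R (Matrix ι ι R) where
  carrier := {N | ∀ i j, b i ≠ b j → N i j = 0}
  zero_mem' _ _ _ := rfl
  add_mem' hx hy i j hij := by rw [add_apply, hx i j hij, hy i j hij, add_zero]
  mul_mem' {x y} hx hy i j hij := by
    rw [mul_apply]
    refine Finset.sum_eq_zero fun l _ ↦ ?_
    rcases eq_or_ne (b i) (b l) with h | h
    · rw [hy l j (h ▸ hij), mul_zero]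
    · rw [hx i l h, zero_mul]
  algebraMap_mem' r i j hij := by
    rw [algebraMap_matrix_apply, if_neg (fun h ↦ hij (congrArg b h))]

theorem mul_apply_self_eq_zero_of_mem_pinchSubalgebra {R β : Type*} [CommSemiring R]
    {b : ι → β} {N P : Matrix ι ι R} (hN : N ∈ pinchSubalgebra R b)
    (hP : ∀ i j, b i = b j → P i j = 0) (i : ι) : (N * P) i i = 0 := by
  rw [mul_apply]
  refine Finset.sum_eq_zero fun l _ ↦ ?_
  rcases eq_or_ne (b i) (b l) with h | h
  · rw [hP l i h.symm, mul_zero]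
  · rw [hN i l h, zero_mul]

end Matrix

theorem pinch_mem_pinchSubalgebra {n k : ℕ} (b : Fin n → Fin k) (M : Matrix (Fin n) (Fin n) ℂ) :
    pinch b M ∈ pinchSubalgebra ℂ b :=
  fun _ _ h ↦ if_neg h

theorem trace_pinch_inv_mul_sub_pinch {n k : ℕ} (b : Fin n → Fin k)
    (M : Matrix (Fin n) (Fin n) ℂ) : ((pinch b M)⁻¹ * (M - pinch b M)).trace = 0 :=
  Finset.sum_eq_zero fun i _ ↦ mul_apply_self_eq_zero_of_mem_pinchSubalgebra
    (nonsing_inv_mem (pinch_mem_pinchSubalgebra b M))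
    (fun i j h ↦ by rw [Matrix.sub_apply, pinch, if_pos h, sub_self]) i

theorem stmt2_general {n k : ℕ}
    (M : Matrix (Fin n) (Fin n) ℂ) (b : Fin n → Fin k)
    (MD Moff A : Matrix (Fin n) (Fin n) ℂ)
    (hMD : MD = pinch b M) (hMoff : Moff = M - MD) (hA : A = MD⁻¹ * Moff)
    (hMDinv : IsUnit MD.det)
    (ρ : ℝ)
    (hρub : ∀ μ ∈ A.charpoly.roots, ‖μ‖ ≤ ρ)
    (hρ1 : ρ < 1)
    (c : ℝ) (hc : c = -(n : ℝ) * Real.log (1 - ρ)) :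
    ‖M.det - MD.det‖ / ‖MD.det‖ ≤ c * ρ * Real.exp (c * ρ) ∧
      (c * ρ < 1 →
        ‖M.det - MD.det‖ / ‖MD.det‖ ≤ 7 / 4 * (c * ρ)) := by
  subst hA hMoff
  have htr : (MD⁻¹ * (M - MD)).trace = 0 := hMD ▸ trace_pinch_inv_mul_sub_pinch b M
  have hdet := norm_det_one_add_sub_one_le htr hρub hρ1
  rw [Fintype.card_fin] at hdet
  have hexponent_nonneg : 0 ≤ (n : ℝ) * (-Real.log (1 - ρ) - ρ) :=
    mul_nonneg n.cast_nonneg (sub_nonneg.mpr (Real.self_le_neg_log_one_sub hρ1))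
  have hexponent_le : (n : ℝ) * (-Real.log (1 - ρ) - ρ) ≤ c * ρ :=
    (mul_le_mul_of_nonneg_left (Real.neg_log_one_sub_sub_self_le hρ1) n.cast_nonneg).trans_eq
      (by rw [hc]; ring)
  have key : ‖M.det - MD.det‖ / ‖MD.det‖ ≤ Real.exp (c * ρ) - 1 := by
    rw [norm_det_sub_div_norm_det hMDinv]
    exact hdet.trans (by gcongr)
  refine ⟨key.trans (Real.exp_sub_one_le_mul_exp _), fun hcρ ↦ key.trans ?_⟩
  have hcρ0 : 0 ≤ c * ρ := hexponent_nonneg.trans hexponent_le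
  have he_sub_one : Real.exp 1 - 1 ≤ 7 / 4 := by
    have := Real.exp_one_lt_d9
    norm_num at this
    linarith
  calc Real.exp (c * ρ) - 1
      ≤ (Real.exp 1 - 1) * (c * ρ) := Real.exp_sub_one_le_mul_of_le_one hcρ0 hcρ.le
    _ ≤ 7 / 4 * (c * ρ) := mul_le_mul_of_nonneg_right he_sub_one hcρ0

/-- **Theorem (diagonal approximation, complex eigenvalues).**
If the pinching `M_D` is invertible and `ρ = ρ(M_D⁻¹ M_off) < 1`, then with
`c = -n ln(1-ρ)` we have `|det M - det M_D| / |det M_D| ≤ c ρ e^{c ρ}`;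
and if moreover `c ρ < 1`, then `|det M - det M_D| / |det M_D| ≤ (7/4) c ρ`. -/
theorem stmt2 {n k : ℕ} (hn : 1 ≤ n)
    (M : Matrix (Fin n) (Fin n) ℂ) (b : Fin n → Fin k)
    (MD Moff A : Matrix (Fin n) (Fin n) ℂ)
    (hMD : MD = pinch b M) (hMoff : Moff = M - MD) (hA : A = MD⁻¹ * Moff)
    (hMDinv : IsUnit MD.det)
    (ρ : ℝ)
    (hρub : ∀ μ ∈ A.charpoly.roots, ‖μ‖ ≤ ρ)
    (hρmax : ∃ μ ∈ A.charpoly.roots, ‖μ‖ = ρ)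
    (hρ1 : ρ < 1)
    (c : ℝ) (hc : c = -(n : ℝ) * Real.log (1 - ρ)) :
    ‖M.det - MD.det‖ / ‖MD.det‖ ≤ c * ρ * Real.exp (c * ρ) ∧
      (c * ρ < 1 →
        ‖M.det - MD.det‖ / ‖MD.det‖ ≤ 7 / 4 * (c * ρ)) :=
  stmt2_general M b MD Moff A hMD hMoff hA hMDinv ρ hρub hρ1 c hc
end

section
/- Let M be an n×n Hermitian positive-definite complex matrix, b a block assignment, M_D the pinching of M with respect to b, and M_off = M − M_D. Then M_D is Hermitian positive definite (in particular invertible with det(M_D) > 0), det(M) > 0, and every eigenvalue of M_D⁻¹ M_off is real and strictly greater than −1. -/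
open Matrix
open scoped ComplexOrder

section Pinch

variable {n k : ℕ} (b : Fin n → Fin k)

theorem dotProduct_pinch_mulVec (M : Matrix (Fin n) (Fin n) ℂ) (x : Fin n → ℂ) :
    star x ⬝ᵥ pinch b M *ᵥ x =
      ∑ c, star ({i | b i = c}.indicator x) ⬝ᵥ M *ᵥ {i | b i = c}.indicator x := by
  simp only [dotProduct, mulVec, pinch, Finset.mul_sum, Pi.star_apply, Set.indicator_apply,
    Set.mem_ofPred_eq]
  conv_rhs => rw [Finset.sum_comm]
  refine Finset.sum_congr rfl fun i _ => ?_
  conv_rhs => rw [Finset.sum_comm]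
  refine Finset.sum_congr rfl fun j _ => ?_
  by_cases h : b i = b j <;> simp [h]

theorem isHermitian_pinch {M : Matrix (Fin n) (Fin n) ℂ} (hM : M.IsHermitian) :
    (pinch b M).IsHermitian := by
  ext i j
  simp only [conjTranspose_apply, pinch, eq_comm (a := b j)]
  split_ifs <;> simp [hM.apply]

theorem posDef_pinch {M : Matrix (Fin n) (Fin n) ℂ} (hM : M.PosDef) : (pinch b M).PosDef := by
  refine posDef_iff_dotProduct_mulVec.mpr ⟨isHermitian_pinch b hM.isHermitian, fun x hx => ?_⟩
  obtain ⟨i, hi⟩ := Function.ne_iff.mp hx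
  have hblock : {j | b j = b i}.indicator x ≠ 0 :=
    Function.ne_iff.mpr ⟨i, by simpa using hi⟩
  rw [dotProduct_pinch_mulVec]
  exact Finset.sum_pos' (fun c _ => hM.posSemidef.dotProduct_mulVec_nonneg _)
    ⟨b i, Finset.mem_univ _, hM.dotProduct_mulVec_pos hblock⟩

end Pinch

namespace Matrix.PosDef

variable {𝕜 ι : Type*} [RCLike 𝕜] [Fintype ι] {A D : Matrix ι ι 𝕜} {μ : 𝕜}

theorem pos_of_mulVec_eq_smul_mulVec (hA : A.PosDef) (hD : D.PosDef) {v : ι → 𝕜} (hv : v ≠ 0)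
    (h : A *ᵥ v = μ • D *ᵥ v) : 0 < μ := by
  have hAv := hA.dotProduct_mulVec_pos hv
  rw [h, dotProduct_smul, smul_eq_mul] at hAv
  exact pos_of_mul_pos_left hAv (hD.dotProduct_mulVec_pos hv).le

theorem pos_of_det_smul_sub_eq_zero [DecidableEq ι] (hA : A.PosDef) (hD : D.PosDef)
    (h : (μ • D - A).det = 0) : 0 < μ := by
  obtain ⟨v, hv, hv0⟩ := exists_mulVec_eq_zero_iff.mpr h
  rw [sub_mulVec, smul_mulVec, sub_eq_zero] at hv0
  exact hA.pos_of_mulVec_eq_smul_mulVec hD hv hv0.symm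

theorem pos_add_one_of_mem_roots_charpoly_inv_mul_sub [DecidableEq ι] (hA : A.PosDef)
    (hD : D.PosDef) (hμ : μ ∈ (D⁻¹ * (A - D)).charpoly.roots) : 0 < μ + 1 := by
  refine hA.pos_of_det_smul_sub_eq_zero hD ?_
  have hroot := Polynomial.isRoot_of_mem_roots hμ
  rw [Polynomial.IsRoot, eval_charpoly] at hroot
  have hfactor : D * (scalar ι μ - D⁻¹ * (A - D)) = (μ + 1) • D - A := by
    rw [Matrix.mul_sub, ← Matrix.mul_assoc, mul_nonsing_inv _ hD.det_pos.ne'.isUnit,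
      Matrix.one_mul, scalar_apply, ← smul_one_eq_diagonal, Matrix.mul_smul, Matrix.mul_one,
      add_smul, one_smul]
    abel
  rw [← hfactor, det_mul, hroot, mul_zero]

end Matrix.PosDef

/-- **Corollary.** If `M` is Hermitian positive definite, then its pinching `M_D`
is Hermitian positive definite (in particular invertible with `det M_D > 0`),
`det M > 0`, and all eigenvalues of `M_D⁻¹ M_off` are real and `> -1`. -/
theorem stmt3 {n k : ℕ}
    (M : Matrix (Fin n) (Fin n) ℂ) (b : Fin n → Fin k)
    (MD Moff : Matrix (Fin n) (Fin n) ℂ)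
    (hMD : MD = pinch b M) (hMoff : Moff = M - MD)
    (hM : M.PosDef) :
    MD.PosDef ∧ IsUnit MD.det ∧
      (MD.det.im = 0 ∧ 0 < MD.det.re) ∧
      (M.det.im = 0 ∧ 0 < M.det.re) ∧
      ∀ μ ∈ (MD⁻¹ * Moff).charpoly.roots, μ.im = 0 ∧ -1 < μ.re := by
  subst hMD hMoff
  have hD := posDef_pinch b hM
  obtain ⟨hDre, hDim⟩ := Complex.pos_iff.mp hD.det_pos
  obtain ⟨hMre, hMim⟩ := Complex.pos_iff.mp hM.det_pos
  refine ⟨hD, hD.det_pos.ne'.isUnit, ⟨hDim.symm, hDre⟩, ⟨hMim.symm, hMre⟩, fun μ hμ => ?_⟩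
  obtain ⟨hre, him⟩ :=
    Complex.pos_iff.mp (hM.pos_add_one_of_mem_roots_charpoly_inv_mul_sub hD hμ)
  simp only [Complex.add_re, Complex.add_im, Complex.one_re, Complex.one_im, add_zero] at hre him
  exact ⟨him.symm, by linarith⟩
end

section
/- Let n = k·s and let M be an n×n Hermitian positive-definite complex matrix that is block tridiagonal with respect to the partition of {1,…,n} into k consecutive blocks of equal size s; that is, M_{ij} = 0 whenever the block indices of i and j differ by more than 1. Let M_D be the pinching of M with respect to this partition and M_off = M − M_D. Then the spectral radius satisfies ρ(M_D⁻¹ M_off) < 1. -/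
/-!
Write `A = M_D` and `B = M_off`. If `A⁻¹ B x = μ x` with `x ≠ 0`, then `x* B x = μ · x* A x`, so
positivity of `x* (A + B) x` and `x* (A - B) x` forces `μ` to be real with `|μ| < 1`. Here
`A + B = M` is positive definite, and so is `A - B`: conjugating `M` by the diagonal matrix with
entries `(-1)^(block index)` flips the sign exactly of the entries joining blocks of opposite
parity, which for a block tridiagonal matrix are all the off-diagonal-block entries.
-/

open Matrix
open scoped ComplexOrder

/-- The pinching (block diagonal part) of `M` with respect to the partition of
`{0,…,k*s-1}` into `k` consecutive blocks of equal size `s`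
(block index of `i` is `i / s`). -/
def pinchBlocks {k s : ℕ} (M : Matrix (Fin (k * s)) (Fin (k * s)) ℂ) :
    Matrix (Fin (k * s)) (Fin (k * s)) ℂ :=
  fun i j => if (i : ℕ) / s = (j : ℕ) / s then M i j else 0

theorem Complex.norm_lt_one_of_pos_add_mul_of_pos_sub_mul {a μ : ℂ}
    (hadd : 0 < a + μ * a) (hsub : 0 < a - μ * a) : ‖μ‖ < 1 := by
  obtain ⟨p, hp, hpa⟩ := RCLike.pos_iff_exists_ofReal.1 hadd
  obtain ⟨q, hq, hqa⟩ := RCLike.pos_iff_exists_ofReal.1 hsub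
  have hμ : μ * ((p + q : ℝ) : ℂ) = ((p - q : ℝ) : ℂ) := by
    simp only [RCLike.ofReal, Complex.coe_algebraMap] at hpa hqa
    push_cast
    linear_combination (μ - 1) * hpa + (μ + 1) * hqa
  have hnorm := congrArg norm hμ
  rw [norm_mul, Complex.norm_real, Complex.norm_real, Real.norm_of_nonneg (by positivity),
    Real.norm_eq_abs] at hnorm
  refine lt_of_mul_lt_mul_right (a := p + q) ?_ (by positivity)
  rw [hnorm, one_mul]
  exact abs_sub_lt_iff.2 ⟨by linarith, by linarith⟩

theorem Matrix.exists_mulVec_eq_smul_of_mem_roots_charpoly {n : Type*} [Fintype n]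
    [DecidableEq n] {A : Matrix n n ℂ} {μ : ℂ} (hμ : μ ∈ A.charpoly.roots) :
    ∃ x : n → ℂ, x ≠ 0 ∧ A *ᵥ x = μ • x := by
  have : Module.End.HasEigenvalue (toLin' A) μ := by
    rw [Module.End.hasEigenvalue_iff_mem_spectrum, spectrum_toLin',
      mem_spectrum_iff_isRoot_charpoly]
    exact (Polynomial.mem_roots'.1 hμ).2
  obtain ⟨x, hx⟩ := this.exists_hasEigenvector
  exact ⟨x, hx.2, by simpa using Module.End.mem_eigenspace_iff.1 hx.1⟩

theorem Matrix.norm_lt_one_of_mem_roots_charpoly_inv_mul {n : Type*} [Fintype n]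
    [DecidableEq n] {A B : Matrix n n ℂ} (hadd : (A + B).PosDef) (hsub : (A - B).PosDef)
    {μ : ℂ} (hμ : μ ∈ (A⁻¹ * B).charpoly.roots) : ‖μ‖ < 1 := by
  have hA : A.PosDef := by
    convert (hadd.add hsub).smul (by norm_num : (0 : ℝ) < 1 / 2) using 1
    ext i j
    simp only [smul_apply, add_apply, sub_apply, Complex.real_smul]
    push_cast
    ring
  obtain ⟨x, hx, hAB⟩ := exists_mulVec_eq_smul_of_mem_roots_charpoly hμ
  have hBx : B *ᵥ x = μ • A *ᵥ x := by
    rw [← mulVec_smul, ← hAB, mulVec_mulVec, ← mul_assoc,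
      mul_nonsing_inv _ ((isUnit_iff_isUnit_det A).1 hA.isUnit), one_mul]
  apply Complex.norm_lt_one_of_pos_add_mul_of_pos_sub_mul (a := star x ⬝ᵥ A *ᵥ x)
  · simpa [add_mulVec, hBx] using hadd.dotProduct_mulVec_pos hx
  · simpa [sub_mulVec, hBx] using hsub.dotProduct_mulVec_pos hx

section BlockTridiagonal

def IsBlockTridiagonal {k s : ℕ} (M : Matrix (Fin (k * s)) (Fin (k * s)) ℂ) : Prop :=
  ∀ i j : Fin (k * s),
    ((i : ℕ) / s + 1 < (j : ℕ) / s ∨ (j : ℕ) / s + 1 < (i : ℕ) / s) → M i j = 0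

variable {k s : ℕ} {M : Matrix (Fin (k * s)) (Fin (k * s)) ℂ}

theorem diagonal_neg_one_pow_mul_mul_diagonal_neg_one_pow
    (htridiag : IsBlockTridiagonal M) :
    diagonal (fun i : Fin (k * s) => (-1 : ℂ) ^ ((i : ℕ) / s)) * M *
        diagonal (fun i : Fin (k * s) => (-1 : ℂ) ^ ((i : ℕ) / s)) =
      pinchBlocks M - (M - pinchBlocks M) := by
  ext i j
  simp only [mul_diagonal, diagonal_mul, Matrix.sub_apply, pinchBlocks]
  rw [mul_comm, ← mul_assoc, ← pow_add]
  split_ifs with hij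
  · rw [hij, ← two_mul, pow_mul]
    simp
  · by_cases hfar : (i : ℕ) / s + 1 < (j : ℕ) / s ∨ (j : ℕ) / s + 1 < (i : ℕ) / s
    · simp [htridiag i j hfar]
    · have hodd : Odd ((j : ℕ) / s + (i : ℕ) / s) := Nat.odd_iff.2 (by omega)
      simp [hodd.neg_one_pow]

theorem posDef_pinchBlocks_sub_sub_pinchBlocks (hM : M.PosDef)
    (htridiag : IsBlockTridiagonal M) :
    (pinchBlocks M - (M - pinchBlocks M)).PosDef := by
  set σ : Fin (k * s) → ℂ := fun i => (-1 : ℂ) ^ ((i : ℕ) / s)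
  have hσ : (diagonal σ)ᴴ = diagonal σ := by simp [σ, diagonal_conjTranspose, star_pow]
  have hinj : Function.Injective (diagonal σ).mulVec :=
    mulVec_injective_iff_isUnit.2 <| isUnit_diagonal.2 <|
      Pi.isUnit_iff.2 fun _ => isUnit_neg_one.pow _
  rw [← diagonal_neg_one_pow_mul_mul_diagonal_neg_one_pow htridiag]
  simpa [hσ] using hM.conjTranspose_mul_mul_same hinj

end BlockTridiagonal

theorem stmt4_general {k s : ℕ}
    (M : Matrix (Fin (k * s)) (Fin (k * s)) ℂ)
    (hM : M.PosDef)
    (htridiag : ∀ i j : Fin (k * s),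
      ((i : ℕ) / s + 1 < (j : ℕ) / s ∨ (j : ℕ) / s + 1 < (i : ℕ) / s) → M i j = 0)
    (MD Moff : Matrix (Fin (k * s)) (Fin (k * s)) ℂ)
    (hMD : MD = pinchBlocks M) (hMoff : Moff = M - MD)
    (ρ : ℝ)
    (hρmax : ∃ μ ∈ (MD⁻¹ * Moff).charpoly.roots, ‖μ‖ = ρ) :
    ρ < 1 := by
  obtain ⟨μ, hμ, rfl⟩ := hρmax
  subst hMD hMoff
  refine norm_lt_one_of_mem_roots_charpoly_inv_mul ?_
    (posDef_pinchBlocks_sub_sub_pinchBlocks hM htridiag) hμ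
  rwa [add_sub_cancel]

/-- **Corollary.** If `M` is an `n × n` Hermitian positive-definite matrix
(`n = k*s`) that is block tridiagonal with respect to the partition into `k`
consecutive blocks of equal size `s`, and `M_D` is the pinching with respect to
this partition, then the spectral radius of `M_D⁻¹ M_off` is `< 1`. -/
theorem stmt4 {k s : ℕ}
    (M : Matrix (Fin (k * s)) (Fin (k * s)) ℂ)
    (hM : M.PosDef)
    (htridiag : ∀ i j : Fin (k * s),
      ((i : ℕ) / s + 1 < (j : ℕ) / s ∨ (j : ℕ) / s + 1 < (i : ℕ) / s) → M i j = 0)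
    (MD Moff : Matrix (Fin (k * s)) (Fin (k * s)) ℂ)
    (hMD : MD = pinchBlocks M) (hMoff : Moff = M - MD)
    (ρ : ℝ)
    (hρub : ∀ μ ∈ (MD⁻¹ * Moff).charpoly.roots, ‖μ‖ ≤ ρ)
    (hρmax : ∃ μ ∈ (MD⁻¹ * Moff).charpoly.roots, ‖μ‖ = ρ) :
    ρ < 1 :=
  stmt4_general M hM htridiag MD Moff hMD hMoff ρ hρmax
end

section
/- Let M be an n×n complex matrix (n ≥ 1), b a block assignment, M_D the pinching of M with respect to b, and M_off = M − M_D. Assume M_D is invertible and ρ = ρ(A) < 1 where A = M_D⁻¹ M_off; set c = −n·ln(1 − ρ). Let λ_1,…,λ_n be the eigenvalues of A counted with multiplicity and, for m ≥ 1, let L_m = Σ_{p=1}^m ((−1)^{p−1}/p)·trace(A^p). Then exp(Σ_{i=1}^n Log(1 + λ_i)) = det(M)/det(M_D), and for every m ≥ 1, |Σ_{i=1}^n Log(1 + λ_i) − L_m| ≤ c ρ^m, where Log denotes the principal branch of the complex logarithm. -/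
/-!
Write `μ₁, …, μₙ` for the eigenvalues of `A`. Since `1 + A = M_D⁻¹ M`, the first claim is
`det (1 + A) = ∏ (1 + μᵢ)`, and `exp (Log (1 + μᵢ)) = 1 + μᵢ` because `|μᵢ| ≤ ρ < 1`. For the
second, `trace (A ^ p) = ∑ μᵢ ^ p` (each generalized eigenspace contributes `μᵢ ^ p` per
dimension, as `A ^ p - μᵢ ^ p` is nilpotent there), so `L_m` is the sum over the eigenvalues of
the Taylor polynomials of `Log (1 + z)` of degree `m`. Each Taylor remainder is bounded by
`∑_{j > m} ρ ^ j / j ≤ ρ ^ m ∑_{q ≥ 1} ρ ^ q / q = -ρ ^ m ln (1 - ρ)`.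
-/

open Matrix

open Module Polynomial

theorem Commute.isNilpotent_pow_sub_pow {R : Type*} [Ring R] {x y : R} (hxy : Commute x y)
    (h : IsNilpotent (x - y)) (p : ℕ) : IsNilpotent (x ^ p - y ^ p) := by
  have hx : Commute x (x - y) := (Commute.refl x).sub_right hxy
  have hy : Commute y (x - y) := hxy.symm.sub_right (.refl y)
  rw [← hxy.geom_sum₂_mul]
  exact Commute.isNilpotent_mul_left
    (.sum_left _ _ _ fun i _ => (hx.pow_left i).mul_left (hy.pow_left _)) h

theorem LinearMap.trace_pow_of_isNilpotent_sub_algebraMap {K V : Type*} [Field K] [AddCommGroup V]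
    [Module K V] [FiniteDimensional K V] {g : End K V} {μ : K}
    (h : IsNilpotent (g - algebraMap K (End K V) μ)) (p : ℕ) :
    trace K V (g ^ p) = finrank K V * μ ^ p := by
  have hnil := (Algebra.commute_algebraMap_right μ g).isNilpotent_pow_sub_pow h p
  have := (LinearMap.isNilpotent_trace_of_isNilpotent hnil).eq_zero
  rwa [map_sub, sub_eq_zero, ← map_pow, Module.algebraMap_end_eq_smul_id, map_smul, trace_id,
    smul_eq_mul, mul_comm] at this

theorem LinearMap.trace_pow_eq_sum_roots_charpoly {K V : Type*} [Field K] [IsAlgClosed K]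
    [AddCommGroup V] [Module K V] [FiniteDimensional K V] (f : End K V) (p : ℕ) :
    trace K V (f ^ p) = (f.charpoly.roots.map (· ^ p)).sum := by
  classical
  have hint : DirectSum.IsInternal f.maxGenEigenspace :=
    DirectSum.isInternal_submodule_of_iSupIndep_of_iSup_eq_top f.independent_maxGenEigenspace
      f.iSup_maxGenEigenspace_eq_top
  have hmem : ∀ μ, f.maxGenEigenspace μ ≠ ⊥ ↔ μ ∈ f.charpoly.roots := fun μ => by
    rw [Ne, ← Submodule.finrank_eq_zero, LinearMap.finrank_maxGenEigenspace_eq, ← count_roots,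
      Multiset.count_eq_zero, not_not]
  have hfin : {μ | f.maxGenEigenspace μ ≠ ⊥}.Finite :=
    f.charpoly.roots.toFinset.finite_toSet.subset fun μ hμ => by simpa using (hmem μ).1 hμ
  rw [trace_eq_sum_trace_restrict' hint hfin
    (fun μ => f.mapsTo_maxGenEigenspace_of_comm ((Commute.refl f).pow_right p) μ),
    Finset.sum_multiset_map_count]
  refine Finset.sum_congr (by ext μ; simp [hmem]) fun μ _ => ?_
  have hf : Set.MapsTo f (f.maxGenEigenspace μ) (f.maxGenEigenspace μ) :=
    f.mapsTo_maxGenEigenspace_of_comm (Commute.refl f) μ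
  have hnil : IsNilpotent (f.restrict hf - algebraMap K _ μ) := by
    convert f.isNilpotent_restrict_maxGenEigenspace_sub_algebraMap μ using 1
    ext; rfl
  rw [← Module.End.pow_restrict p hf, trace_pow_of_isNilpotent_sub_algebraMap hnil,
    LinearMap.finrank_maxGenEigenspace_eq, count_roots, nsmul_eq_mul]

theorem Matrix.trace_pow_eq_sum_roots_charpoly {n K : Type*} [Fintype n] [DecidableEq n]
    [Field K] [IsAlgClosed K] (A : Matrix n n K) (p : ℕ) :
    (A ^ p).trace = (A.charpoly.roots.map (· ^ p)).sum := by
  rw [← trace_toLin'_eq, toLin'_pow, LinearMap.trace_pow_eq_sum_roots_charpoly, charpoly_toLin']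

theorem Matrix.det_one_add_eq_prod_roots_charpoly_s6 {n K : Type*} [Fintype n] [DecidableEq n]
    [Field K] [IsAlgClosed K] (A : Matrix n n K) :
    (1 + A).det = (A.charpoly.roots.map (1 + ·)).prod := by
  have hcard : A.charpoly.roots.card = Fintype.card n := by
    rw [IsAlgClosed.card_roots_eq_natDegree, charpoly_natDegree_eq_dim]
  have heval : ∀ μ : K, (X - C μ).eval (-1) = -1 * (1 + μ) := fun μ => by simp; ring
  have h := A.eval_charpoly (-1)
  rw [(IsAlgClosed.splits A.charpoly).eq_prod_roots_of_monic A.charpoly_monic, eval_multiset_prod,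
    Multiset.map_map, show scalar n (-1 : K) - A = -(1 + A) by rw [map_neg, map_one, neg_add'],
    det_neg] at h
  simp only [Function.comp_def, heval, Multiset.prod_map_mul, Multiset.map_const',
    Multiset.prod_replicate, hcard] at h
  exact (mul_left_cancel₀ (by simp) h).symm

theorem Complex.logTaylor_succ_eq_sum_Icc (m : ℕ) (z : ℂ) :
    logTaylor (m + 1) z = ∑ p ∈ Finset.Icc 1 m, ((-1) ^ (p - 1) / p) * z ^ p := by
  rw [logTaylor, Finset.sum_range_succ', ← Finset.Ico_add_one_right_eq_Icc,
    Finset.sum_Ico_eq_sum_range]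
  simp only [pow_zero, mul_one, Nat.cast_zero, div_zero, add_zero, add_tsub_cancel_right]
  refine Finset.sum_congr rfl fun k _ => ?_
  rw [Nat.add_sub_cancel_left, add_comm 1 k]
  push_cast
  ring

theorem Complex.norm_log_sub_logTaylor_le_pow_mul_neg_log {z : ℂ} {r : ℝ} (hz : ‖z‖ ≤ r)
    (hr : r < 1) (m : ℕ) :
    ‖log (1 + z) - logTaylor (m + 1) z‖ ≤ r ^ m * -Real.log (1 - r) := by
  have hr0 : 0 ≤ r := (norm_nonneg z).trans hz
  have htail := (hasSum_nat_add_iff' (m + 1)).mpr (hasSum_taylorSeries_log (hz.trans_lt hr))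
  have hbound := (Real.hasSum_pow_div_log_of_abs_lt_one (abs_lt.mpr ⟨by linarith, hr⟩)).mul_left
    (r ^ m)
  refine htail.norm_le_of_bounded hbound fun j => ?_
  calc ‖(-1) ^ (j + (m + 1) + 1) * z ^ (j + (m + 1)) / ((j + (m + 1) : ℕ) : ℂ)‖
      = ‖z‖ ^ (m + (j + 1)) / (m + (j + 1) : ℕ) := by
        simp only [norm_div, norm_mul, norm_pow, norm_neg, norm_one, one_pow, one_mul,
          Complex.norm_natCast]
        ring_nf
    _ ≤ r ^ (m + (j + 1)) / (j + 1 : ℕ) := by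
      gcongr ?_ / ?_
      · gcongr
      · exact_mod_cast Nat.le_add_left (j + 1) m
    _ = r ^ m * (r ^ (j + 1) / (j + 1)) := by push_cast; ring

theorem Matrix.exp_sum_log_one_add_roots_charpoly {n : Type*} [Fintype n] [DecidableEq n]
    (A : Matrix n n ℂ) (hA : ∀ μ ∈ A.charpoly.roots, ‖μ‖ < 1) :
    Complex.exp (A.charpoly.roots.map fun μ => Complex.log (1 + μ)).sum = (1 + A).det := by
  have hexp_log : ∀ μ ∈ A.charpoly.roots, Complex.exp (Complex.log (1 + μ)) = 1 + μ :=
    fun μ hμ => Complex.exp_log fun h => by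
      simpa [eq_neg_of_add_eq_zero_right h] using hA μ hμ
  rw [Complex.exp_multiset_sum, Multiset.map_map, Function.comp_def,
    Multiset.map_congr rfl hexp_log, det_one_add_eq_prod_roots_charpoly_s6]

theorem Matrix.norm_sum_log_one_add_roots_charpoly_sub_le {n : Type*} [Fintype n]
    [DecidableEq n] (A : Matrix n n ℂ) {ρ : ℝ} (hA : ∀ μ ∈ A.charpoly.roots, ‖μ‖ ≤ ρ)
    (hρ : ρ < 1) (m : ℕ) :
    ‖(A.charpoly.roots.map fun μ => Complex.log (1 + μ)).sum
        - ∑ p ∈ Finset.Icc 1 m, ((-1 : ℂ) ^ (p - 1) / p) * (A ^ p).trace‖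
      ≤ Fintype.card n * (ρ ^ m * -Real.log (1 - ρ)) := by
  have hcard : A.charpoly.roots.card = Fintype.card n := by
    rw [IsAlgClosed.card_roots_eq_natDegree, charpoly_natDegree_eq_dim]
  simp only [trace_pow_eq_sum_roots_charpoly, ← Multiset.sum_map_mul_left, ← Multiset.sum_map_sum,
    ← Complex.logTaylor_succ_eq_sum_Icc, ← Multiset.sum_map_sub]
  refine (norm_multiset_sum_le _).trans ?_
  rw [Multiset.map_map, ← hcard, ← nsmul_eq_mul, ← Multiset.sum_replicate,
    ← Multiset.map_const']
  exact Multiset.sum_map_le_sum_map _ _ fun μ hμ =>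
    Complex.norm_log_sub_logTaylor_le_pow_mul_neg_log (hA μ hμ) hρ m

theorem stmt6_general {n : ℕ}
    (M : Matrix (Fin n) (Fin n) ℂ)
    (MD Moff A : Matrix (Fin n) (Fin n) ℂ)
    (hMoff : Moff = M - MD) (hA : A = MD⁻¹ * Moff)
    (hMDinv : IsUnit MD.det)
    (ρ : ℝ)
    (hρub : ∀ μ ∈ A.charpoly.roots, ‖μ‖ ≤ ρ)
    (hρ1 : ρ < 1)
    (c : ℝ) (hc : c = -(n : ℝ) * Real.log (1 - ρ))
    (L : ℕ → ℂ)
    (hL : ∀ m, L m = ∑ p ∈ Finset.Icc 1 m, ((-1 : ℂ) ^ (p - 1) / p) * (A ^ p).trace)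
    (S : ℂ) (hS : S = (A.charpoly.roots.map (fun μ => Complex.log (1 + μ))).sum) :
    Complex.exp S = M.det / MD.det ∧
      ∀ m : ℕ, 1 ≤ m → ‖S - L m‖ ≤ c * ρ ^ m := by
  have hone_add : 1 + A = MD⁻¹ * M := by
    rw [hA, hMoff, Matrix.mul_sub, nonsing_inv_mul MD hMDinv, add_sub_cancel]
  refine ⟨?_, fun m _ => ?_⟩
  · rw [hS, exp_sum_log_one_add_roots_charpoly A fun μ hμ => (hρub μ hμ).trans_lt hρ1,
      hone_add, det_mul, det_nonsing_inv, Ring.inverse_eq_inv, div_eq_inv_mul]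
  · calc ‖S - L m‖ ≤ Fintype.card (Fin n) * (ρ ^ m * -Real.log (1 - ρ)) := by
          rw [hS, hL]
          exact norm_sum_log_one_add_roots_charpoly_sub_le A hρub hρ1 m
      _ = c * ρ ^ m := by rw [Fintype.card_fin, hc]; ring

/-- **Theorem (logarithm approximation).**
Let `M_D` be the pinching of `M`, `A = M_D⁻¹ M_off` with `ρ = ρ(A) < 1`,
`c = -n ln(1-ρ)`, `λ_1,…,λ_n` the eigenvalues of `A` and
`L_m = Σ_{p=1}^m ((-1)^{p-1}/p) trace(A^p)`. Then
`exp(Σ_i Log(1+λ_i)) = det M / det M_D` and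
`|Σ_i Log(1+λ_i) - L_m| ≤ c ρ^m` for every `m ≥ 1`. -/
theorem stmt6 {n k : ℕ} (hn : 1 ≤ n)
    (M : Matrix (Fin n) (Fin n) ℂ) (b : Fin n → Fin k)
    (MD Moff A : Matrix (Fin n) (Fin n) ℂ)
    (hMD : MD = pinch b M) (hMoff : Moff = M - MD) (hA : A = MD⁻¹ * Moff)
    (hMDinv : IsUnit MD.det)
    (ρ : ℝ)
    (hρub : ∀ μ ∈ A.charpoly.roots, ‖μ‖ ≤ ρ)
    (hρmax : ∃ μ ∈ A.charpoly.roots, ‖μ‖ = ρ)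
    (hρ1 : ρ < 1)
    (c : ℝ) (hc : c = -(n : ℝ) * Real.log (1 - ρ))
    (L : ℕ → ℂ)
    (hL : ∀ m, L m = ∑ p ∈ Finset.Icc 1 m, ((-1 : ℂ) ^ (p - 1) / p) * (A ^ p).trace)
    (S : ℂ) (hS : S = (A.charpoly.roots.map (fun μ => Complex.log (1 + μ))).sum) :
    Complex.exp S = M.det / MD.det ∧
      ∀ m : ℕ, 1 ≤ m → ‖S - L m‖ ≤ c * ρ ^ m :=
  stmt6_general M MD Moff A hMoff hA hMDinv ρ hρub hρ1 c hc L hL S hS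
end

section
/- Let M be an n×n complex matrix, b a block assignment, M_D the pinching of M with respect to b, and M_off = M − M_D. Assume M_D is invertible and that M_off is an odd checkerboard matrix with respect to b, i.e., (M_off)_{ij} = 0 whenever b(i) and b(j) have the same parity. Then trace((M_D⁻¹ M_off)^p) = 0 for every odd integer p ≥ 1. Consequently, the approximations δ_m = ln(det(M_D)) + Σ_{p=1}^m ((−1)^{p−1}/p)·trace((M_D⁻¹M_off)^p) satisfy δ_m = δ_{m−1} for every odd m ≥ 1 and δ_m = δ_{m−2} − trace((M_D⁻¹M_off)^m)/m for every even m ≥ 2. -/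
open Matrix

/-- **Theorem (checkerboard matrices).**
If `M_D` is invertible and `M_off` is an odd checkerboard matrix with respect to
the block assignment `b` (i.e. `(M_off)_{ij} = 0` whenever `b i` and `b j` have
the same parity), then `trace((M_D⁻¹ M_off)^p) = 0` for every odd `p ≥ 1`;
consequently the approximations
`δ_m = log(det M_D) + Σ_{p=1}^m ((-1)^{p-1}/p) trace((M_D⁻¹M_off)^p)` satisfy
`δ_m = δ_{m-1}` for odd `m` and `δ_m = δ_{m-2} - trace((M_D⁻¹M_off)^m)/m`
for even `m ≥ 2`. -/
theorem stmt8 {n k : ℕ}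
    (M : Matrix (Fin n) (Fin n) ℂ) (b : Fin n → Fin k)
    (MD Moff A : Matrix (Fin n) (Fin n) ℂ)
    (hMD : MD = pinch b M) (hMoff : Moff = M - MD) (hA : A = MD⁻¹ * Moff)
    (hMDinv : IsUnit MD.det)
    (hcheck : ∀ i j : Fin n, (b i : ℕ) % 2 = (b j : ℕ) % 2 → Moff i j = 0)
    (δ : ℕ → ℂ)
    (hδ : ∀ m, δ m = Complex.log MD.det +
      ∑ p ∈ Finset.Icc 1 m, ((-1 : ℂ) ^ (p - 1) / p) * (A ^ p).trace) :
    (∀ p : ℕ, Odd p → (A ^ p).trace = 0) ∧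
      (∀ m : ℕ, Odd m → 1 ≤ m → δ m = δ (m - 1)) ∧
      (∀ m : ℕ, Even m → 2 ≤ m → δ m = δ (m - 2) - (A ^ m).trace / m) := by
  set S : Matrix (Fin n) (Fin n) ℂ :=
    Matrix.diagonal (fun i => (-1 : ℂ) ^ ((b i : ℕ) % 2)) with hS
  have hS2 : S * S = 1 := by
    rw [hS, Matrix.diagonal_mul_diagonal]
    have : (fun i => (-1 : ℂ) ^ ((b i : ℕ) % 2) * (-1 : ℂ) ^ ((b i : ℕ) % 2)) =
        fun _ => (1 : ℂ) := by
      funext i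
      rw [← mul_pow]
      norm_num
    rw [this, Matrix.diagonal_one]
  have hSMoff : S * Moff = -(Moff * S) := by
    ext i j
    simp only [hS, Matrix.diagonal_mul, Matrix.mul_diagonal, Matrix.neg_apply]
    by_cases h : (b i : ℕ) % 2 = (b j : ℕ) % 2
    · rw [hcheck i j h]; ring
    · have hi := Nat.mod_two_eq_zero_or_one (b i : ℕ)
      have hj := Nat.mod_two_eq_zero_or_one (b j : ℕ)
      rcases hi with hi | hi <;> rcases hj with hj | hj <;>
        simp [hi, hj] at h ⊢ <;> ring
  have hSMD : S * MD = MD * S := by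
    ext i j
    simp only [hS, Matrix.diagonal_mul, Matrix.mul_diagonal, hMD, pinch]
    by_cases h : b i = b j
    · simp [h]; ring
    · simp [h]
  have hMDmul : MD * MD⁻¹ = 1 := Matrix.mul_nonsing_inv _ hMDinv
  have hMDmul' : MD⁻¹ * MD = 1 := Matrix.nonsing_inv_mul _ hMDinv
  have hSMDinv : S * MD⁻¹ = MD⁻¹ * S := by
    calc S * MD⁻¹ = MD⁻¹ * MD * S * MD⁻¹ := by rw [hMDmul']; simp
    _ = MD⁻¹ * (S * MD) * MD⁻¹ := by rw [hSMD]; noncomm_ring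
    _ = MD⁻¹ * S * (MD * MD⁻¹) := by noncomm_ring
    _ = MD⁻¹ * S := by rw [hMDmul]; simp
  have hSA : S * A = -(A * S) := by
    rw [hA, ← mul_assoc, hSMDinv, mul_assoc, hSMoff]
    noncomm_ring
  have key : ∀ p : ℕ, S * A ^ p = (-1 : ℂ) ^ p • (A ^ p * S) := by
    intro p
    induction p with
    | zero => simp
    | succ p ih =>
      rw [pow_succ', ← mul_assoc, hSA, pow_succ']
      rw [neg_mul, mul_assoc, ih]
      rw [Matrix.mul_smul]
      rw [← neg_smul, ← mul_assoc]
      ring_nf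
  have htr : ∀ p : ℕ, Odd p → (A ^ p).trace = 0 := by
    intro p hp
    have h1 : (S * (A ^ p * S)).trace = (A ^ p * S * S).trace :=
      Matrix.trace_mul_comm _ _
    rw [mul_assoc, hS2, mul_one] at h1
    have h2 : S * (A ^ p * S) = (-1 : ℂ) ^ p • (A ^ p * S * S) := by
      rw [← mul_assoc, key, Matrix.smul_mul, mul_assoc]
    rw [h2, mul_assoc, hS2, mul_one, Matrix.trace_smul, hp.neg_one_pow] at h1
    simp only [neg_one_smul] at h1
    have := neg_eq_iff_add_eq_zero.mp h1; linear_combination this / 2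
  refine ⟨htr, ?_, ?_⟩
  · intro m hm hm1
    obtain ⟨m', rfl⟩ := Nat.exists_eq_add_of_le hm1
    rw [hδ, hδ]
    have : (1 + m') - 1 = m' := by omega
    rw [this]
    rw [show 1 + m' = m' + 1 by omega]
    rw [Finset.sum_Icc_succ_top (by omega)]
    rw [htr _ (by rw [show 1 + m' = m' + 1 by omega] at hm; exact hm)]
    ring
  · intro m hm hm2
    obtain ⟨m', rfl⟩ := Nat.exists_eq_add_of_le hm2
    rw [hδ, hδ]
    have : (2 + m') - 2 = m' := by omega
    rw [this]
    rw [show 2 + m' = (m' + 1) + 1 by omega]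
    rw [Finset.sum_Icc_succ_top (by omega), Finset.sum_Icc_succ_top (by omega)]
    have hodd : Odd (m' + 1) := by
      rcases hm with ⟨r, hr⟩
      exact ⟨r - 1, by omega⟩
    rw [htr _ hodd]
    have hsign : ((-1 : ℂ)) ^ ((m' + 1 + 1) - 1) = -1 := hodd.neg_one_pow
    rw [show ((m' + 1 + 1) - 1) = m' + 1 from rfl] at *
    rw [hsign]
    push_cast
    ring
end

section
/- Let M be an (m+k)×(m+k) Hermitian positive-definite complex matrix written in block form M = [[A, B],[B*, S]], where A is m×m and S is k×k. Then both S and M are invertible and, for every 1 ≤ i ≤ k, the diagonal entries of the inverses satisfy (S⁻¹)_{ii} ≤ (M⁻¹)_{m+i, m+i} (both being positive real numbers). -/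
/-!
For a positive definite `M` and a principal compression `S = M[e, e]`, the block matrix
`[[M⁻¹[e, e], J], [Jᴴ, M]]`, with `J` the coordinate inclusion, is positive semidefinite because
its Schur complement with respect to `M` vanishes. Compressing it along `e` in the second block
gives `[[M⁻¹[e, e], 1], [1, S]]`, still positive semidefinite, and its Schur complement with
respect to `S` is `M⁻¹[e, e] - S⁻¹`. Reading off diagonal entries gives the inequality.
-/

open Matrix
open scoped ComplexOrder

namespace Matrix

variable {ι κ 𝕜 : Type*} [Fintype ι] [DecidableEq ι] [Fintype κ] [DecidableEq κ] [RCLike 𝕜]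

theorem PosDef.posSemidef_submatrix_inv_sub_inv_submatrix {M : Matrix ι ι 𝕜} (hM : M.PosDef)
    {e : κ → ι} (he : Function.Injective e) :
    (M⁻¹.submatrix e e - (M.submatrix e e)⁻¹).PosSemidef := by
  let J : Matrix κ ι 𝕜 := (1 : Matrix ι ι 𝕜).submatrix e id
  let := hM.isUnit.invertible
  have hS := hM.submatrix he
  let := hS.isUnit.invertible
  have hX : (fromBlocks (M⁻¹.submatrix e e) J Jᴴ M).PosSemidef := by
    have hJ : J * M⁻¹ * Jᴴ = M⁻¹.submatrix e e := by
      ext i j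
      simp [J, mul_apply, one_apply]
    rw [PosDef.fromBlocks₂₂ _ _ hM, hJ, sub_self]
    exact PosSemidef.zero
  have hY : (fromBlocks (M⁻¹.submatrix e e) 1 1ᴴ (M.submatrix e e)).PosSemidef := by
    convert hX.submatrix (Sum.map id e) using 1
    ext (i | i) (j | j) <;> simp [J, one_apply, he.eq_iff]
  simpa using (PosDef.fromBlocks₂₂ _ _ hS).mp hY

end Matrix

/-- **Lemma.** If `M = [[A, B], [B*, S]]` is Hermitian positive definite, then
`S` and `M` are invertible and the diagonal entries of the inverses (which are
positive reals) satisfy `(S⁻¹)_{ii} ≤ (M⁻¹)_{m+i, m+i}` for every `i`. -/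
theorem stmt10 {m k : ℕ}
    (A : Matrix (Fin m) (Fin m) ℂ) (B : Matrix (Fin m) (Fin k) ℂ)
    (S : Matrix (Fin k) (Fin k) ℂ)
    (M : Matrix (Fin m ⊕ Fin k) (Fin m ⊕ Fin k) ℂ)
    (hM : M = Matrix.fromBlocks A B Bᴴ S)
    (hpd : M.PosDef) :
    IsUnit S.det ∧ IsUnit M.det ∧
      ∀ i : Fin k,
        ((S⁻¹ i i).im = 0 ∧ 0 < (S⁻¹ i i).re) ∧
        ((M⁻¹ (Sum.inr i) (Sum.inr i)).im = 0 ∧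
          0 < (M⁻¹ (Sum.inr i) (Sum.inr i)).re) ∧
        (S⁻¹ i i).re ≤ (M⁻¹ (Sum.inr i) (Sum.inr i)).re := by
  have hS : M.submatrix Sum.inr Sum.inr = S := by rw [hM]; rfl
  have hSpd : S.PosDef := hS ▸ hpd.submatrix Sum.inr_injective
  have hdiff := hpd.posSemidef_submatrix_inv_sub_inv_submatrix Sum.inr_injective
  rw [hS] at hdiff
  refine ⟨(isUnit_iff_isUnit_det S).mp hSpd.isUnit, (isUnit_iff_isUnit_det M).mp hpd.isUnit,
    fun i => ?_⟩
  obtain ⟨hSre, hSim⟩ := Complex.pos_iff.mp (hSpd.inv.diag_pos (i := i))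
  obtain ⟨hMre, hMim⟩ := Complex.pos_iff.mp (hpd.inv.diag_pos (i := Sum.inr i))
  have hle : S⁻¹ i i ≤ M⁻¹ (Sum.inr i) (Sum.inr i) := sub_nonneg.mp (hdiff.diag_nonneg (i := i))
  exact ⟨⟨hSim.symm, hSre⟩, ⟨hMim.symm, hMre⟩, (Complex.le_def.mp hle).1⟩
end

section
/- Let M = (m_{ij}) be an n×n Hermitian positive-definite complex matrix. For each i ∈ {1,…,n} choose an index set J_i ⊆ {1,…,i} with i ∈ J_i, let S_i be the principal submatrix of M with rows and columns indexed by J_i, and let σ_i be the diagonal entry of S_i⁻¹ in the position corresponding to index i (so σ_i is a positive real number). Then det(M) ≤ Π_{i=1}^n (1/σ_i) ≤ Π_{i=1}^n m_{ii}. -/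
open Matrix
open scoped ComplexOrder

/-!
For `A` positive definite, `1 / (A⁻¹)ᵢᵢ` is the minimum of `x* A x` over the vectors with
`xᵢ = 1`, attained at the `i`-th column of `A⁻¹` rescaled. Testing `x = eᵢ` gives
`1 / σᵢ ≤ mᵢᵢ`, and extending vectors by zero shows that `1 / σᵢ` can only decrease as `Jᵢ`
grows, so it is at least its value for `Jᵢ = {1, …, i}`. For these leading blocks Cramer's rule
gives `σᵢ = det M[<i] / det M[≤i]`, so the product of those values telescopes to `det M`.
-/

/-- For a principal submatrix `M[J,J]` of `M` and an index `i ∈ J`, the diagonal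
entry of `(M[J,J])⁻¹` in the position corresponding to `i`. -/
noncomputable def sigmaEntry {n : ℕ} (M : Matrix (Fin n) (Fin n) ℂ)
    (J : Finset (Fin n)) (i : Fin n) (hi : i ∈ J) : ℂ :=
  (M.submatrix (fun a : J => (a : Fin n)) (fun a : J => (a : Fin n)))⁻¹ ⟨i, hi⟩ ⟨i, hi⟩

theorem Matrix.det_mul_inv_apply_self {R m : Type*} [CommRing R] [Fintype m] [DecidableEq m]
    {A : Matrix m m R} (hA : IsUnit A.det) (i : m) :
    A.det * A⁻¹ i i = (A.submatrix ((↑) : {j // j ≠ i} → m) (↑)).det := by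
  have : Subsingleton {j // ¬j ≠ i} := ⟨fun a b => Subtype.ext (by grind)⟩
  have hrow : (A.updateRow i (Pi.single i 1)).det =
      (A.submatrix ((↑) : {j // j ≠ i} → m) (↑)).det := by
    rw [twoBlockTriangular_det _ (· ≠ i) fun r hr c hc => by simp_all,
      det_eq_elem_of_subsingleton (toSquareBlockProp _ fun j => ¬j ≠ i) ⟨i, not_not.2 rfl⟩]
    simp only [toSquareBlockProp_def, of_apply, updateRow_self, Pi.single_eq_same, mul_one]
    congr 1
    ext r c
    simp [updateRow_ne r.2]
  rw [inv_def, smul_apply, smul_eq_mul, ← mul_assoc, Ring.mul_inverse_cancel _ hA, one_mul,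
    adjugate_apply, hrow]

theorem Matrix.dotProduct_mulVec_extend_zero {R k m : Type*} [Fintype k] [Fintype m]
    [CommSemiring R] [StarRing R] (A : Matrix m m R) {e : k → m} (he : e.Injective)
    (x : k → R) :
    star (Function.extend e x 0) ⬝ᵥ (A *ᵥ Function.extend e x 0) =
      star x ⬝ᵥ (A.submatrix e e *ᵥ x) := by
  have hy (b : m) (hb : b ∉ Set.range e) : Function.extend e x 0 b = 0 :=
    Function.extend_apply' _ _ _ hb
  have hrow (a : k) : (A *ᵥ Function.extend e x 0) (e a) = (A.submatrix e e *ᵥ x) a :=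
    (Fintype.sum_of_injective e he _ _ (fun b hb => by simp [hy b hb])
      fun a' => by simp [he.extend_apply]).symm
  exact (Fintype.sum_of_injective e he _ _ (fun b hb => by simp [hy b hb])
    fun a => by simp [hrow, he.extend_apply]).symm

namespace Matrix.PosDef

variable {m : Type*} [Fintype m] [DecidableEq m] {A : Matrix m m ℂ}

theorem re_inv_apply_self_pos (hA : A.PosDef) (i : m) : 0 < (A⁻¹ i i).re :=
  (Complex.pos_iff.1 hA.inv.diag_pos).1

theorem ofReal_re_inv_apply_self (hA : A.PosDef) (i : m) : ((A⁻¹ i i).re : ℂ) = A⁻¹ i i :=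
  Complex.ext rfl (Complex.pos_iff.1 hA.inv.diag_pos).2

theorem isLeast_re_dotProduct_mulVec (hA : A.PosDef) (i : m) :
    IsLeast {r | ∃ x : m → ℂ, x i = 1 ∧ (star x ⬝ᵥ (A *ᵥ x)).re = r} (1 / (A⁻¹ i i).re) := by
  have hc : ((A⁻¹ i i)⁻¹).re = 1 / (A⁻¹ i i).re := by
    conv_lhs => rw [← ofReal_re_inv_apply_self hA i]
    rw [← Complex.ofReal_inv, Complex.ofReal_re, one_div]
  set c := (A⁻¹ i i)⁻¹
  set v := c • A⁻¹.col i
  have hv : v i = 1 := inv_mul_cancel₀ fun h => (hA.re_inv_apply_self_pos i).ne' (by simp [h])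
  have hAv : A *ᵥ v = c • Pi.single i 1 := by
    rw [mulVec_smul, ← mulVec_single_one, mulVec_mulVec,
      mul_nonsing_inv _ hA.det_pos.ne'.isUnit, one_mulVec]
  have hvA : star v ᵥ* A = star c • Pi.single i 1 := by
    rw [← hA.isHermitian.eq, ← star_mulVec, hAv, star_smul, Pi.star_single, star_one]
  have dot_Av (y : m → ℂ) : star y ⬝ᵥ (A *ᵥ v) = c * star (y i) := by
    rw [hAv, dotProduct_smul, dotProduct_single_one, smul_eq_mul, Pi.star_apply]
  have dot_vA (y : m → ℂ) : star v ⬝ᵥ (A *ᵥ y) = star c * y i := by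
    rw [dotProduct_mulVec, hvA, smul_dotProduct, single_one_dotProduct, smul_eq_mul]
  refine ⟨⟨v, hv, by rw [dot_Av, hv, star_one, mul_one, hc]⟩, ?_⟩
  rintro _ ⟨x, hx, rfl⟩
  -- the cross terms between `x - v` and `v` vanish because `(x - v) i = 0`
  have hu : (x - v) i = 0 := by rw [Pi.sub_apply, hx, hv, sub_self]
  have hsplit : star x ⬝ᵥ (A *ᵥ x) = star (x - v) ⬝ᵥ (A *ᵥ (x - v)) + c := by
    conv_lhs => rw [← sub_add_cancel x v]
    rw [star_add, mulVec_add, dotProduct_add, add_dotProduct, add_dotProduct, dot_Av, dot_Av,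
      dot_vA, hu, hv]
    simp
  rw [hsplit, Complex.add_re, hc, le_add_iff_nonneg_left]
  exact hA.posSemidef.re_dotProduct_nonneg (x - v)

theorem one_div_re_inv_apply_self_le (hA : A.PosDef) (i : m) :
    1 / (A⁻¹ i i).re ≤ (A i i).re :=
  (hA.isLeast_re_dotProduct_mulVec i).2 ⟨Pi.single i 1, Pi.single_eq_same i 1, by
    rw [Pi.star_single, star_one, mulVec_single_one, single_one_dotProduct, col_apply]⟩

theorem re_inv_submatrix_apply_self_le {k : Type*} [Fintype k] [DecidableEq k] (hA : A.PosDef)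
    {e : k → m} (he : e.Injective) (a : k) :
    ((A.submatrix e e)⁻¹ a a).re ≤ (A⁻¹ (e a) (e a)).re := by
  have hB := hA.submatrix he
  obtain ⟨x, hx, hval⟩ := (hB.isLeast_re_dotProduct_mulVec a).1
  have hle := (hA.isLeast_re_dotProduct_mulVec (e a)).2 ⟨Function.extend e x 0,
    by rw [he.extend_apply, hx], by rw [dotProduct_mulVec_extend_zero A he, hval]⟩
  exact (one_div_le_one_div (hA.re_inv_apply_self_pos _) (hB.re_inv_apply_self_pos a)).1 hle

end Matrix.PosDef

section SigmaEntry

variable {n : ℕ} {M : Matrix (Fin n) (Fin n) ℂ}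

theorem re_sigmaEntry_pos (hM : M.PosDef) (J : Finset (Fin n)) {i : Fin n} (hi : i ∈ J) :
    0 < (sigmaEntry M J i hi).re :=
  (hM.submatrix Subtype.val_injective).re_inv_apply_self_pos _

theorem ofReal_re_sigmaEntry (hM : M.PosDef) (J : Finset (Fin n)) {i : Fin n} (hi : i ∈ J) :
    ((sigmaEntry M J i hi).re : ℂ) = sigmaEntry M J i hi :=
  (hM.submatrix Subtype.val_injective).ofReal_re_inv_apply_self _

theorem one_div_re_sigmaEntry_le (hM : M.PosDef) (J : Finset (Fin n)) {i : Fin n} (hi : i ∈ J) :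
    1 / (sigmaEntry M J i hi).re ≤ (M i i).re :=
  (hM.submatrix Subtype.val_injective).one_div_re_inv_apply_self_le _

theorem re_sigmaEntry_le_of_subset (hM : M.PosDef) {S T : Finset (Fin n)} (hST : S ⊆ T)
    {i : Fin n} (hi : i ∈ S) : (sigmaEntry M S i hi).re ≤ (sigmaEntry M T i (hST hi)).re :=
  (hM.submatrix Subtype.val_injective).re_inv_submatrix_apply_self_le
    (e := fun a : S => (⟨a, hST a.2⟩ : T)) (fun _ _ h => Subtype.ext (by simpa using h))
    ⟨i, hi⟩

theorem det_submatrix_mul_sigmaEntry (hM : M.PosDef) {J : Finset (Fin n)} {i : Fin n}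
    (hi : i ∈ J) :
    (M.submatrix ((↑) : J → Fin n) (↑)).det * sigmaEntry M J i hi =
      (M.submatrix ((↑) : J.erase i → Fin n) (↑)).det := by
  rw [sigmaEntry, det_mul_inv_apply_self (hM.submatrix Subtype.val_injective).det_pos.ne'.isUnit]
  let e : {j : J // j ≠ ⟨i, hi⟩} ≃ J.erase i :=
    { toFun := fun j => ⟨j.1, Finset.mem_erase.2 ⟨fun h => j.2 (Subtype.ext h), j.1.2⟩⟩
      invFun := fun j => ⟨⟨j, Finset.mem_of_mem_erase j.2⟩,
        fun h => Finset.ne_of_mem_erase j.2 (congrArg Subtype.val h)⟩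
      left_inv := fun _ => rfl
      right_inv := fun _ => rfl }
  exact det_submatrix_equiv_self e (M.submatrix ((↑) : J.erase i → Fin n) (↑))

theorem re_det_submatrix_eq_prod_of_isLowerSet (hM : M.PosDef) {J : Finset (Fin n)}
    (hJ : IsLowerSet (J : Set (Fin n))) :
    (M.submatrix ((↑) : J → Fin n) (↑)).det.re =
      ∏ i ∈ J, 1 / (sigmaEntry M (Finset.Iic i) i (Finset.mem_Iic.2 le_rfl)).re := by
  induction J using Finset.induction_on_max with
  | empty => simp
  | insert a s has ih =>
    have ha : a ∉ s := fun h => lt_irrefl a (has a h)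
    have hs : IsLowerSet (s : Set (Fin n)) := fun x y hyx hx => by
      rcases Finset.mem_insert.1 (hJ hyx (Finset.mem_insert_of_mem hx)) with rfl | h
      · exact absurd (hyx.trans_lt (has x hx)) (lt_irrefl _)
      · exact h
    have hIic : insert a s = Finset.Iic a := by
      ext x
      refine ⟨fun hx => ?_, fun hxa => hJ (Finset.mem_Iic.1 hxa) (Finset.mem_insert_self a s)⟩
      rcases Finset.mem_insert.1 hx with rfl | hx
      · exact Finset.mem_Iic.2 le_rfl
      · exact Finset.mem_Iic.2 (has x hx).le
    have herase : (Finset.Iic a).erase a = s := by rw [← hIic, Finset.erase_insert ha]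
    have key :=
      congrArg Complex.re (det_submatrix_mul_sigmaEntry hM (Finset.mem_Iic.2 (le_refl a)))
    rw [herase, ← ofReal_re_sigmaEntry hM, Complex.re_mul_ofReal] at key
    rw [Finset.prod_insert ha, ← ih hs, ← key, hIic]
    field_simp [(re_sigmaEntry_pos hM _ _).ne']

theorem re_det_eq_prod_sigmaEntry_Iic (hM : M.PosDef) :
    M.det.re = ∏ i, 1 / (sigmaEntry M (Finset.Iic i) i (Finset.mem_Iic.2 le_rfl)).re := by
  rw [← re_det_submatrix_eq_prod_of_isLowerSet hM (by simp [isLowerSet_univ]),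
    ← det_submatrix_equiv_self (Equiv.subtypeUnivEquiv Finset.mem_univ) M]
  rfl

end SigmaEntry

/-- **Corollary (bounds for sparse inverse approximations).**
Let `M` be Hermitian positive definite, and for each `i` let `J_i ⊆ {1,…,i}`
with `i ∈ J_i`, and let `σ_i` be the diagonal entry of `(M[J_i,J_i])⁻¹`
corresponding to `i`. Then `det M ≤ Π_i (1/σ_i) ≤ Π_i m_{ii}`. -/
theorem stmt11 {n : ℕ}
    (M : Matrix (Fin n) (Fin n) ℂ) (hM : M.PosDef)
    (J : Fin n → Finset (Fin n))
    (hmem : ∀ i : Fin n, i ∈ J i)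
    (hle : ∀ i : Fin n, ∀ j ∈ J i, j ≤ i) :
    M.det.re ≤ ∏ i : Fin n, (1 / (sigmaEntry M (J i) i (hmem i)).re) ∧
      ∏ i : Fin n, (1 / (sigmaEntry M (J i) i (hmem i)).re) ≤
        ∏ i : Fin n, (M i i).re := by
  constructor
  · rw [re_det_eq_prod_sigmaEntry_Iic hM]
    refine Finset.prod_le_prod (fun i _ => (one_div_pos.2 (re_sigmaEntry_pos hM _ _)).le)
      fun i _ => one_div_le_one_div_of_le (re_sigmaEntry_pos hM _ _) ?_
    exact re_sigmaEntry_le_of_subset hM (fun j hj => Finset.mem_Iic.2 (hle i j hj)) (hmem i)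
  · exact Finset.prod_le_prod (fun i _ => (one_div_pos.2 (re_sigmaEntry_pos hM _ _)).le)
      fun i _ => one_div_re_sigmaEntry_le hM _ _
end
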